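/- Over the empty theory on a relational signature with one unary predicate P, no condition forces ∀x. P(x); consequently every condition forces (∀x. P(x)) → ⊥, even though this sentence is not classically provable from the empty theory. -/

import Mathlib

/- STATEMENT 18: over the empty theory with one unary predicate P, no condition forces
∀x.P(x); every condition forces ¬∀x.P(x); and ¬∀x.P(x) is not classically provable. -/

namespace CoherentForcing

/- ## Syntax: terms, atoms, conditions, substitutions -/

/-- Ground terms over a signature of function symbols `F` with arities `far`,
with named variables in ℕ. -/
inductive Tm (F : Type) (far : F → ℕ) : Type
  | fvar (x : ℕ) : Tm F far
  | app (f : F) (a : Fin (far f) → Tm F far) : Tm F far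

variable {F : Type} {far : F → ℕ} {R : Type} {rar : R → ℕ}

/-- Free variables of a ground term. -/
def Tm.fv : Tm F far → Set ℕ
  | .fvar x => {x}
  | .app _ a => ⋃ i, (a i).fv

/-- Applying a substitution to a ground term. -/
def Tm.subst (σ : ℕ → Tm F far) : Tm F far → Tm F far
  | .fvar x => σ x
  | .app f a => .app f fun i => (a i).subst σ

/-- Atoms over relation symbols `R` with arities `rar`. -/
abbrev Atom (F : Type) (far : F → ℕ) (R : Type) (rar : R → ℕ) : Type :=
  (r : R) × (Fin (rar r) → Tm F far)

/-- Free variables of an atom. -/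
def Atom.fv (a : Atom F far R rar) : Set ℕ := ⋃ i, (a.2 i).fv

/-- Applying a substitution to an atom. -/
def Atom.subst (σ : ℕ → Tm F far) (a : Atom F far R rar) : Atom F far R rar :=
  ⟨a.1, fun i => (a.2 i).subst σ⟩

/-- A forcing condition (X;A): a finite set X of variables together with a finite
set A of atoms whose variables lie in X. -/
structure Cond (F : Type) (far : F → ℕ) (R : Type) (rar : R → ℕ) : Type where
  X : Finset ℕ
  A : Set (Atom F far R rar)
  finA : A.Finite
  wf : ∀ a ∈ A, Atom.fv a ⊆ ↑X

/-- The three categories of forcing conditions: renamings, variable substitutions,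
term substitutions. -/
inductive MC | rn | vs | ts

/-- `Mor mc D C σ`: the substitution `σ` is a morphism `D ⟶ C` of conditions in the
category determined by `mc`. -/
structure Mor (mc : MC) (D C : Cond F far R rar) (σ : ℕ → Tm F far) : Prop where
  fvsub : ∀ x ∈ C.X, (σ x).fv ⊆ ↑D.X
  atoms : ∀ a ∈ C.A, Atom.subst σ a ∈ D.A
  cls : match mc with
    | .ts => True
    | .vs => ∀ x ∈ C.X, ∃ y, σ x = Tm.fvar y
    | .rn => (∀ x ∈ C.X, ∃ y, σ x = Tm.fvar y) ∧ Set.InjOn σ ↑C.X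

/-- `σ` is an isomorphism of conditions `D ≅ C` (a bijective renaming). -/
def IsIsoMor (D C : Cond F far R rar) (σ : ℕ → Tm F far) : Prop :=
  Mor .rn D C σ ∧ ∃ τ : ℕ → Tm F far, Mor .rn C D τ ∧
    (∀ x ∈ C.X, (σ x).subst τ = Tm.fvar x) ∧ (∀ y ∈ D.X, (τ y).subst σ = Tm.fvar y)

/-- A sink: a set of pairs (domain condition, substitution), thought of as a family of
morphisms into a fixed condition. -/
abbrev Sink (F : Type) (far : F → ℕ) (R : Type) (rar : R → ℕ) : Type :=
  Set (Cond F far R rar × (ℕ → Tm F far))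

/- ## Formulas (infinitary first-order, locally nameless: named free variables,
de Bruijn indices for bound variables, the variable bound by the nearest enclosing
binder being the *last* index) -/

/-- Terms in context `n`: named free variables plus `n` de Bruijn indices. -/
inductive Tmc (F : Type) (far : F → ℕ) (n : ℕ) : Type
  | fvar (x : ℕ) : Tmc F far n
  | bvar (i : Fin n) : Tmc F far n
  | app (f : F) (a : Fin (far f) → Tmc F far n) : Tmc F far n

/-- A ground term is a term in any context. -/
def Tm.toTmc {n : ℕ} : Tm F far → Tmc F far n
  | .fvar x => .fvar x
  | .app f a => .app f fun i => (a i).toTmc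

/-- Evaluating a term in context via `σ` on free variables and `ρ` on indices. -/
def Tmc.eval (σ : ℕ → Tm F far) {n : ℕ} (ρ : Fin n → Tm F far) :
    Tmc F far n → Tm F far
  | .fvar x => σ x
  | .bvar i => ρ i
  | .app f a => .app f fun i => (a i).eval σ ρ

/-- Named free variables of a term in context. -/
def Tmc.fv {n : ℕ} : Tmc F far n → Set ℕ
  | .fvar x => {x}
  | .bvar _ => ∅
  | .app _ a => ⋃ i, (a i).fv

/-- A term in context has no named free variables. -/
def Tmc.noFvar {n : ℕ} : Tmc F far n → Prop
  | .fvar _ => False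
  | .bvar _ => True
  | .app _ a => ∀ i, (a i).noFvar

/-- Applying a substitution to the named free variables of a term in context. -/
def Tmc.substFv (σ : ℕ → Tm F far) {n : ℕ} : Tmc F far n → Tmc F far n
  | .fvar x => (σ x).toTmc
  | .bvar i => .bvar i
  | .app f a => .app f fun i => (a i).substFv σ

/-- (Possibly infinitary) first-order formulas in context `n`. -/
inductive Fml (F : Type) (far : F → ℕ) (R : Type) (rar : R → ℕ) : ℕ → Type 1
  | atom {n : ℕ} (r : R) (ts : Fin (rar r) → Tmc F far n) : Fml F far R rar n
  | eq {n : ℕ} (s t : Tmc F far n) : Fml F far R rar n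
  | top {n : ℕ} : Fml F far R rar n
  | bot {n : ℕ} : Fml F far R rar n
  | conj {n : ℕ} : Fml F far R rar n → Fml F far R rar n → Fml F far R rar n
  | disj {n : ℕ} (I : Type) (f : I → Fml F far R rar n) : Fml F far R rar n
  | imp {n : ℕ} : Fml F far R rar n → Fml F far R rar n → Fml F far R rar n
  | all {n : ℕ} : Fml F far R rar (n + 1) → Fml F far R rar n
  | ex {n : ℕ} : Fml F far R rar (n + 1) → Fml F far R rar n

/-- Negation. -/
abbrev Fml.neg {n : ℕ} (φ : Fml F far R rar n) : Fml F far R rar n := .imp φ .bot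

/-- Named free variables of a formula. -/
def Fml.fv : {n : ℕ} → Fml F far R rar n → Set ℕ
  | _, .atom _ ts => ⋃ i, (ts i).fv
  | _, .eq s t => s.fv ∪ t.fv
  | _, .top => ∅
  | _, .bot => ∅
  | _, .conj φ ψ => φ.fv ∪ ψ.fv
  | _, .disj _ f => ⋃ i, (f i).fv
  | _, .imp φ ψ => φ.fv ∪ ψ.fv
  | _, .all φ => φ.fv
  | _, .ex φ => φ.fv

/-- Applying a substitution to the named free variables of a formula. -/
def Fml.substFv (σ : ℕ → Tm F far) : {n : ℕ} → Fml F far R rar n → Fml F far R rar n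
  | _, .atom r ts => .atom r fun i => (ts i).substFv σ
  | _, .eq s t => .eq (s.substFv σ) (t.substFv σ)
  | _, .top => .top
  | _, .bot => .bot
  | _, .conj φ ψ => .conj (φ.substFv σ) (ψ.substFv σ)
  | _, .disj I f => .disj I fun i => (f i).substFv σ
  | _, .imp φ ψ => .imp (φ.substFv σ) (ψ.substFv σ)
  | _, .all φ => .all (φ.substFv σ)
  | _, .ex φ => .ex (φ.substFv σ)

/-- Shifting de Bruijn indices of a term into an extended context. -/
def Tmc.shift {k : ℕ} : Tmc F far k → Tmc F far (k + 1)
  | .fvar x => .fvar x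
  | .bvar i => .bvar i.castSucc
  | .app f a => .app f fun i => (a i).shift

/-- Simultaneous substitution for the de Bruijn indices of a term. -/
def Tmc.bsubst {m k : ℕ} (θ : Fin m → Tmc F far k) : Tmc F far m → Tmc F far k
  | .fvar x => .fvar x
  | .bvar i => θ i
  | .app f a => .app f fun i => (a i).bsubst θ

/-- Extending a de Bruijn substitution under a binder. -/
def extendB {m k : ℕ} (θ : Fin m → Tmc F far k) : Fin (m + 1) → Tmc F far (k + 1) :=
  Fin.snoc (fun i => (θ i).shift) (.bvar (Fin.last k))

/-- Simultaneous substitution for the de Bruijn indices of a formula. -/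
def Fml.bsubst : {m k : ℕ} → (Fin m → Tmc F far k) → Fml F far R rar m → Fml F far R rar k
  | _, _, θ, .atom r ts => .atom r fun i => (ts i).bsubst θ
  | _, _, θ, .eq s t => .eq (s.bsubst θ) (t.bsubst θ)
  | _, _, _, .top => .top
  | _, _, _, .bot => .bot
  | _, _, θ, .conj φ ψ => .conj (φ.bsubst θ) (ψ.bsubst θ)
  | _, _, θ, .disj I f => .disj I fun i => (f i).bsubst θ
  | _, _, θ, .imp φ ψ => .imp (φ.bsubst θ) (ψ.bsubst θ)
  | _, _, θ, .all φ => .all (φ.bsubst (extendB θ))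
  | _, _, θ, .ex φ => .ex (φ.bsubst (extendB θ))

/-- Opening the outermost binder of a one-variable formula with a ground term. -/
def Fml.open0 (t : Tm F far) (φ : Fml F far R rar 1) : Fml F far R rar 0 :=
  φ.bsubst fun _ => t.toTmc

/- ## Coherent theories and the generated coverage -/

/-- Atoms in context `n` (for the components of coherent axioms). -/
abbrev CAtom (F : Type) (far : F → ℕ) (R : Type) (rar : R → ℕ) (n : ℕ) : Type :=
  (r : R) × (Fin (rar r) → Tmc F far n)

/-- Instantiating an atom in context `m` by an assignment of its de Bruijn variables. -/
def CAtom.inst {m : ℕ} (ι : Fin m → Tm F far) (a : CAtom F far R rar m) :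
    Atom F far R rar :=
  ⟨a.1, fun i => (a.2 i).eval Tm.fvar ι⟩

/-- A coherent axiom ∀ x₁…x_m (φ₀ → ⋁_d ∃ y₁…y_{k_d}. φ_d), where the φ's are finite
conjunctions of atoms (as lists), presented without named free variables. -/
structure CohAx (F : Type) (far : F → ℕ) (R : Type) (rar : R → ℕ) : Type where
  m : ℕ
  hyp : List (CAtom F far R rar m)
  concl : List ((k : ℕ) × List (CAtom F far R rar (m + k)))
  hypClosed : ∀ a ∈ hyp, ∀ i, (a.2 i).noFvar
  conclClosed : ∀ d ∈ concl, ∀ a ∈ d.2, ∀ i, (a.2 i).noFvar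

/-- The `j`-th fresh variable not occurring in the condition `C`. -/
def freshVar (C : Cond F far R rar) (j : ℕ) : ℕ := C.X.sup id + 1 + j

lemma Tm.fv_eval {n : ℕ} (ι : Fin n → Tm F far) (t : Tmc F far n) (ht : t.noFvar) :
    (t.eval Tm.fvar ι).fv ⊆ ⋃ j, (ι j).fv := by
  induction t with
  | fvar x => exact absurd ht id
  | bvar i => exact Set.subset_iUnion (fun j => (ι j).fv) i
  | app f a ih =>
    intro y hy
    obtain ⟨i, hi⟩ := Set.mem_iUnion.mp hy
    exact ih i (ht i) hi

/-- The extension (X, y⃗; A, φ_d) of a condition by one disjunct of an instantiated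
coherent axiom, using fresh variables y⃗ for the existentially bound variables. -/
def Cond.extend (C : Cond F far R rar) {m k : ℕ} (ι : Fin m → Tm F far)
    (hι : ∀ i, (ι i).fv ⊆ ↑C.X) (ats : List (CAtom F far R rar (m + k)))
    (hats : ∀ a ∈ ats, ∀ i, (a.2 i).noFvar) : Cond F far R rar where
  X := C.X ∪ Finset.image (fun j : Fin k => freshVar C j) Finset.univ
  A := C.A ∪ (CAtom.inst (Fin.append ι fun j : Fin k => Tm.fvar (freshVar C j))) ''
        {a | a ∈ ats}
  finA := C.finA.union (ats.finite_toSet.image _)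
  wf := by
    rintro a (ha | ⟨b, hb, rfl⟩)
    · exact (C.wf a ha).trans (by intro y hy; simp only [Finset.coe_union]; exact Or.inl hy)
    · intro y hy
      obtain ⟨i, hi⟩ := Set.mem_iUnion.mp hy
      obtain ⟨j, hj⟩ := Set.mem_iUnion.mp (Tm.fv_eval _ _ (hats b hb i) hi)
      simp only [Finset.coe_union, Finset.coe_image, Set.mem_union]
      revert hj
      refine Fin.addCases (fun i0 hj => ?_) (fun j0 hj => ?_) j
      · rw [Fin.append_left] at hj
        exact Or.inl (hι i0 hj)
      · rw [Fin.append_right] at hj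
        rcases hj with rfl
        exact Or.inr ⟨j0, Finset.mem_coe.mpr (Finset.mem_univ j0), rfl⟩

/-- The coverage ◁_T generated by a coherent theory `T`: isomorphism singletons are
covers, and for each instance of an axiom of `T` applicable at `C`, the union of
covers of the extensions of `C` by the disjuncts is a cover of `C` (the connecting
morphisms being the identity substitutions). -/
inductive Cov (T : Set (CohAx F far R rar)) :
    Cond F far R rar → Sink F far R rar → Prop
  | iso {C D : Cond F far R rar} {σ : ℕ → Tm F far} (h : IsIsoMor D C σ) :
      Cov T C {(D, σ)}
  | step {C : Cond F far R rar} (ax : CohAx F far R rar) (hax : ax ∈ T)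
      (ι : Fin ax.m → Tm F far) (hι : ∀ i, (ι i).fv ⊆ ↑C.X)
      (hhyp : ∀ a ∈ ax.hyp, CAtom.inst ι a ∈ C.A)
      (U : Fin ax.concl.length → Sink F far R rar)
      (hU : ∀ i : Fin ax.concl.length,
        Cov T (C.extend ι hι (ax.concl.get i).2
            (fun a ha j => ax.conclClosed _ (List.get_mem _ i) a ha j))
          (U i)) :
      Cov T C (⋃ i, U i)

/- ## The forcing relation -/

/-- The forcing relation `C ⊩ φ[σ, ρ]`, where `mc` determines the category of
conditions (renamings / variable substitutions / term substitutions), `cov` is a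
coverage, `σ` interprets the named free variables and `ρ` the de Bruijn variables
of `φ` by terms over `C`. -/
def Forces (mc : MC) (cov : Cond F far R rar → Sink F far R rar → Prop) :
    {n : ℕ} → Cond F far R rar → (ℕ → Tm F far) → (Fin n → Tm F far) →
      Fml F far R rar n → Prop
  | _, C, σ, ρ, .atom r ts => ∃ U, cov C U ∧ ∀ p ∈ U,
      (⟨r, fun i => ((ts i).eval σ ρ).subst p.2⟩ : Atom F far R rar) ∈ p.1.A
  | _, C, σ, ρ, .eq s t => ∃ U, cov C U ∧ ∀ p ∈ U,
      (s.eval σ ρ).subst p.2 = (t.eval σ ρ).subst p.2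
  | _, _, _, _, .top => True
  | _, C, _, _, .bot => cov C ∅
  | _, C, σ, ρ, .conj φ ψ => Forces mc cov C σ ρ φ ∧ Forces mc cov C σ ρ ψ
  | _, C, σ, ρ, .disj _ f => ∃ U, cov C U ∧ ∀ p ∈ U, ∃ i,
      Forces mc cov p.1 (fun x => (σ x).subst p.2) (fun i0 => (ρ i0).subst p.2) (f i)
  | _, C, σ, ρ, .imp φ ψ => ∀ D τ, Mor mc D C τ →
      Forces mc cov D (fun x => (σ x).subst τ) (fun i => (ρ i).subst τ) φ →
      Forces mc cov D (fun x => (σ x).subst τ) (fun i => (ρ i).subst τ) ψ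
  | _, C, σ, ρ, .all φ => ∀ D τ, Mor mc D C τ → ∀ t : Tm F far, t.fv ⊆ ↑D.X →
      Forces mc cov D (fun x => (σ x).subst τ)
        (Fin.snoc (fun i => (ρ i).subst τ) t) φ
  | _, C, σ, ρ, .ex φ => ∃ U, cov C U ∧ ∀ p ∈ U, ∃ t, t.fv ⊆ ↑p.1.X ∧
      Forces mc cov p.1 (fun x => (σ x).subst p.2)
        (Fin.snoc (fun i => (ρ i).subst p.2) t) φ

/- ## Provability -/

/-- Intuitionistic (or, when `em` holds, classical) provability `Γ ⊢_X φ` in logic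
without equality, sound for empty domains: `X` is the set of free variables allowed
in the derivation. -/
inductive Prv (em : Prop) :
    Finset ℕ → Set (Fml F far R rar 0) → Fml F far R rar 0 → Prop
  | ax {X Γ φ} (h : φ ∈ Γ) : Prv em X Γ φ
  | topI {X Γ} : Prv em X Γ .top
  | botE {X Γ φ} : Prv em X Γ .bot → Prv em X Γ φ
  | conjI {X Γ φ ψ} : Prv em X Γ φ → Prv em X Γ ψ → Prv em X Γ (.conj φ ψ)
  | conjE1 {X Γ φ ψ} : Prv em X Γ (.conj φ ψ) → Prv em X Γ φ
  | conjE2 {X Γ φ ψ} : Prv em X Γ (.conj φ ψ) → Prv em X Γ ψ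
  | disjI {X Γ I} {f : I → Fml F far R rar 0} (i : I) :
      Prv em X Γ (f i) → Prv em X Γ (.disj I f)
  | disjE {X Γ I} {f : I → Fml F far R rar 0} {ψ} :
      Prv em X Γ (.disj I f) → (∀ i, Prv em X (insert (f i) Γ) ψ) → Prv em X Γ ψ
  | impI {X Γ φ ψ} : Prv em X (insert φ Γ) ψ → Prv em X Γ (.imp φ ψ)
  | impE {X Γ φ ψ} : Prv em X Γ (.imp φ ψ) → Prv em X Γ φ → Prv em X Γ ψ
  | allI {X : Finset ℕ} {Γ} {φ} (x : ℕ) (hx : x ∉ X) (hφ : x ∉ Fml.fv (.all φ))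
      (hΓ : ∀ ψ ∈ Γ, x ∉ Fml.fv ψ) :
      Prv em (insert x X) Γ (Fml.open0 (.fvar x) φ) → Prv em X Γ (.all φ)
  | allE {X : Finset ℕ} {Γ} {φ} (t : Tm F far) (ht : t.fv ⊆ ↑X) :
      Prv em X Γ (.all φ) → Prv em X Γ (Fml.open0 t φ)
  | exI {X : Finset ℕ} {Γ} {φ} (t : Tm F far) (ht : t.fv ⊆ ↑X) :
      Prv em X Γ (Fml.open0 t φ) → Prv em X Γ (.ex φ)
  | exE {X : Finset ℕ} {Γ} {φ} {ψ} (x : ℕ) (hx : x ∉ X) (hφ : x ∉ Fml.fv (.ex φ)) (hψ : x ∉ Fml.fv ψ)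
      (hΓ : ∀ χ ∈ Γ, x ∉ Fml.fv χ) :
      Prv em X Γ (.ex φ) →
      Prv em (insert x X) (insert (Fml.open0 (.fvar x) φ) Γ) ψ → Prv em X Γ ψ
  | em {X Γ} (φ : Fml F far R rar 0) (h : em) :
      Prv em X Γ (.disj Bool fun b => bif b then φ else φ.neg)

/- ## Coherent axioms as formulas -/

/-- An atom of a condition, as a closed formula. -/
def atomF (a : Atom F far R rar) : Fml F far R rar 0 :=
  .atom a.1 fun i => (a.2 i).toTmc

/-- Universal closure. -/
def Fml.alls : (m : ℕ) → Fml F far R rar m → Fml F far R rar 0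
  | 0, φ => φ
  | m + 1, φ => Fml.alls m (.all φ)

/-- Iterated existential quantification. -/
def Fml.exs {m : ℕ} : (k : ℕ) → Fml F far R rar (m + k) → Fml F far R rar m
  | 0, φ => φ
  | k + 1, φ => Fml.exs k (.ex φ)

/-- Conjunction of a list of atoms in context. -/
def listConj {n : ℕ} (l : List (CAtom F far R rar n)) : Fml F far R rar n :=
  l.foldr (fun a ψ => .conj (.atom a.1 a.2) ψ) .top

/-- A coherent axiom as a sentence: ∀ x⃗ (φ₀ → ⋁_d ∃ y⃗_d. φ_d). -/
def CohAx.toFml (ax : CohAx F far R rar) : Fml F far R rar 0 :=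
  .alls ax.m (.imp (listConj ax.hyp)
    (.disj (Fin ax.concl.length) fun i =>
      .exs (ax.concl.get i).1 (listConj (ax.concl.get i).2)))

/- ## Classes of formulas -/

/-- Generalized geometric implications (in logic without equality):
φ ::= α | φ₁ ∧ φ₂ | ⋁ᵢ φᵢ | ∃x.φ | ∀x.φ | (α → φ) with α an atom, ⊤ or ⊥. -/
inductive GGI : {n : ℕ} → Fml F far R rar n → Prop
  | atom {n r ts} : GGI (n := n) (.atom r ts)
  | top {n} : GGI (n := n) .top
  | bot {n} : GGI (n := n) .bot
  | conj {n} {φ ψ : Fml F far R rar n} : GGI φ → GGI ψ → GGI (.conj φ ψ)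
  | disj {n I} {f : I → Fml F far R rar n} : (∀ i, GGI (f i)) → GGI (.disj I f)
  | ex {n} {φ : Fml F far R rar (n + 1)} : GGI φ → GGI (.ex φ)
  | all {n} {φ : Fml F far R rar (n + 1)} : GGI φ → GGI (.all φ)
  | impAtom {n r ts} {φ : Fml F far R rar n} : GGI φ → GGI (.imp (.atom r ts) φ)
  | impTop {n} {φ : Fml F far R rar n} : GGI φ → GGI (.imp .top φ)
  | impBot {n} {φ : Fml F far R rar n} : GGI φ → GGI (.imp .bot φ)

/-- Positive formulas (no equality): built from atoms, ⊤, ⊥ by ∧, ⋁, ∃. -/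
inductive Pos : {n : ℕ} → Fml F far R rar n → Prop
  | atom {n r ts} : Pos (n := n) (.atom r ts)
  | top {n} : Pos (n := n) .top
  | bot {n} : Pos (n := n) .bot
  | conj {n} {φ ψ : Fml F far R rar n} : Pos φ → Pos ψ → Pos (.conj φ ψ)
  | disj {n I} {f : I → Fml F far R rar n} : (∀ i, Pos (f i)) → Pos (.disj I f)
  | ex {n} {φ : Fml F far R rar (n + 1)} : Pos φ → Pos (.ex φ)

/-- Geometric implications: universally quantified implications between positive
formulas. -/
inductive GeomImp : {n : ℕ} → Fml F far R rar n → Prop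
  | base {n} {φ ψ : Fml F far R rar n} : Pos φ → Pos ψ → GeomImp (Fml.imp φ ψ)
  | all {n} {φ : Fml F far R rar (n + 1)} : GeomImp φ → GeomImp (Fml.all φ)


/- STATEMENT 18: Over the empty theory on a relational signature with one unary
predicate P, no condition forces ∀x.P(x); consequently every condition forces
¬∀x.P(x); yet ¬∀x.P(x) is not provable classically from the empty theory. -/

/-- The empty functional signature. -/
abbrev ESig : Empty → ℕ := fun f => f.elim

/-- One unary predicate symbol P. -/
abbrev USig : Unit → ℕ := fun _ => 1

/-- The sentence ∀x. P(x). -/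
def allP : Fml Empty ESig Unit USig 0 := .all (.atom () fun _ => .bvar 0)

/-! Extending a condition `C` by a fresh variable `y` gives a condition in which `P(y)` is not
an atom. Over the empty theory every cover is a single isomorphism, so an atom is forced only
if it already belongs to the condition; hence `P(y)`, and with it `∀x.P(x)`, is never forced,
and `¬∀x.P(x)` is forced everywhere. Classically `¬∀x.P(x)` is refuted by the one-point
structure in which `P` holds. -/

lemma Tm.subst_subst (σ τ : ℕ → Tm F far) (t : Tm F far) :
    (t.subst σ).subst τ = t.subst fun x => (σ x).subst τ := by
  induction t with
  | fvar x => rfl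
  | app f a ih => exact congrArg (Tm.app f) (funext ih)

lemma Tm.subst_congr {σ τ : ℕ → Tm F far} {t : Tm F far} (h : ∀ x ∈ t.fv, σ x = τ x) :
    t.subst σ = t.subst τ := by
  induction t with
  | fvar x => exact h x rfl
  | app f a ih =>
    exact congrArg (Tm.app f) (funext fun i => ih i fun x hx => h x (Set.mem_iUnion_of_mem i hx))

lemma Tm.subst_fvar (t : Tm F far) : t.subst Tm.fvar = t := by
  induction t with
  | fvar x => rfl
  | app f a ih => exact congrArg (Tm.app f) (funext ih)

lemma Atom.subst_fvar (a : Atom F far R rar) : Atom.subst Tm.fvar a = a :=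
  congrArg (Sigma.mk a.1) (funext fun _ => Tm.subst_fvar _)

lemma freshVar_notMem (C : Cond F far R rar) (j : ℕ) : freshVar C j ∉ C.X := fun h => by
  have := Finset.le_sup (f := id) h
  simp only [freshVar, id_eq] at this
  omega

def Cond.insertVar (C : Cond F far R rar) (y : ℕ) : Cond F far R rar where
  X := insert y C.X
  A := C.A
  finA := C.finA
  wf a ha := (C.wf a ha).trans (by simp)

lemma Mor.fvar_of_subset (mc : MC) {C D : Cond F far R rar} (hX : C.X ⊆ D.X) (hA : C.A ⊆ D.A) :
    Mor mc D C Tm.fvar where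
  fvsub x hx := by simpa [Tm.fv] using hX hx
  atoms a ha := by rw [Atom.subst_fvar]; exact hA ha
  cls := by
    cases mc with
    | ts => trivial
    | vs => exact fun x _ => ⟨x, rfl⟩
    | rn => exact ⟨fun x _ => ⟨x, rfl⟩, fun _ _ _ _ h => Tm.fvar.inj h⟩

lemma IsIsoMor.mem_of_subst_mem {C D : Cond F far R rar} {σ : ℕ → Tm F far}
    (hσ : IsIsoMor D C σ) {a : Atom F far R rar} (ha : a.fv ⊆ C.X) (h : Atom.subst σ a ∈ D.A) :
    a ∈ C.A := by
  obtain ⟨-, τ, hτ, hστ, -⟩ := hσ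
  obtain ⟨r, ts⟩ := a
  have hround : Atom.subst τ (Atom.subst σ ⟨r, ts⟩) = ⟨r, ts⟩ := by
    refine congrArg (Sigma.mk r) (funext fun i => ?_)
    change ((ts i).subst σ).subst τ = ts i
    rw [Tm.subst_subst]
    conv_rhs => rw [← Tm.subst_fvar (ts i)]
    exact Tm.subst_congr fun x hx => hστ x (ha (Set.mem_iUnion_of_mem i hx))
  rw [← hround]
  exact hτ.atoms _ h

lemma cov_empty_eq_singleton {C : Cond F far R rar} {U : Sink F far R rar}
    (h : Cov ∅ C U) : ∃ D σ, IsIsoMor D C σ ∧ U = {(D, σ)} := by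
  cases h with
  | iso hσ => exact ⟨_, _, hσ, rfl⟩
  | step ax hax => exact absurd hax (Set.notMem_empty ax)

lemma not_cov_empty_empty (C : Cond F far R rar) : ¬ Cov ∅ C ∅ := fun h => by
  obtain ⟨D, σ, -, hU⟩ := cov_empty_eq_singleton h
  exact Set.singleton_ne_empty _ hU.symm

lemma forces_neg_empty_iff (mc : MC) (C : Cond F far R rar) (σ : ℕ → Tm F far) {n : ℕ}
    (ρ : Fin n → Tm F far) (φ : Fml F far R rar n) :
    Forces mc (Cov ∅) C σ ρ φ.neg ↔ ∀ D τ, Mor mc D C τ →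
      ¬ Forces mc (Cov ∅) D (fun x => (σ x).subst τ) (fun i => (ρ i).subst τ) φ := by
  simp only [Forces, not_cov_empty_empty, imp_false]

lemma mem_of_forces_atom_empty {mc : MC} {C : Cond F far R rar} {σ : ℕ → Tm F far} {n : ℕ}
    {ρ : Fin n → Tm F far} {r : R} {ts : Fin (rar r) → Tmc F far n}
    (h : Forces mc (Cov ∅) C σ ρ (.atom r ts)) (hfv : ∀ i, ((ts i).eval σ ρ).fv ⊆ C.X) :
    (⟨r, fun i => (ts i).eval σ ρ⟩ : Atom F far R rar) ∈ C.A := by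
  obtain ⟨U, hU, hmem⟩ := h
  obtain ⟨D, σ', hσ', rfl⟩ := cov_empty_eq_singleton hU
  exact hσ'.mem_of_subst_mem (Set.iUnion_subset hfv) (hmem _ rfl)

/-- Truth in the one-element structure in which every relation holds; quantifiers and
terms are then irrelevant. -/
def Fml.TrueInPoint : {n : ℕ} → Fml F far R rar n → Prop
  | _, .atom _ _ => True
  | _, .eq _ _ => True
  | _, .top => True
  | _, .bot => False
  | _, .conj φ ψ => φ.TrueInPoint ∧ ψ.TrueInPoint
  | _, .disj _ f => ∃ i, (f i).TrueInPoint
  | _, .imp φ ψ => φ.TrueInPoint → ψ.TrueInPoint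
  | _, .all φ => φ.TrueInPoint
  | _, .ex φ => φ.TrueInPoint

lemma Fml.trueInPoint_bsubst {m k : ℕ} (θ : Fin m → Tmc F far k) (φ : Fml F far R rar m) :
    (φ.bsubst θ).TrueInPoint ↔ φ.TrueInPoint := by
  induction φ generalizing k with
  | disj I f ih => exact exists_congr fun i => ih i θ
  | conj φ ψ ihφ ihψ => exact and_congr (ihφ θ) (ihψ θ)
  | imp φ ψ ihφ ihψ => exact imp_congr (ihφ θ) (ihψ θ)
  | all φ ih => exact ih _
  | ex φ ih => exact ih _
  | _ => rfl

lemma Fml.trueInPoint_open0 (t : Tm F far) (φ : Fml F far R rar 1) :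
    (φ.open0 t).TrueInPoint ↔ φ.TrueInPoint :=
  Fml.trueInPoint_bsubst _ φ

lemma Prv.trueInPoint {em : Prop} {X : Finset ℕ} {Γ : Set (Fml F far R rar 0)}
    {φ : Fml F far R rar 0} (h : Prv em X Γ φ) (hΓ : ∀ ψ ∈ Γ, ψ.TrueInPoint) :
    φ.TrueInPoint := by
  have hinsert {Γ : Set (Fml F far R rar 0)} {χ} (hχ : χ.TrueInPoint)
      (hΓ : ∀ ψ ∈ Γ, ψ.TrueInPoint) : ∀ ψ ∈ insert χ Γ, ψ.TrueInPoint := by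
    rintro ψ (rfl | hψ)
    exacts [hχ, hΓ ψ hψ]
  induction h with
  | ax h => exact hΓ _ h
  | topI => trivial
  | botE _ ih => exact (ih hΓ).elim
  | conjI _ _ ih₁ ih₂ => exact ⟨ih₁ hΓ, ih₂ hΓ⟩
  | conjE1 _ ih => exact (ih hΓ).1
  | conjE2 _ ih => exact (ih hΓ).2
  | disjI i _ ih => exact ⟨i, ih hΓ⟩
  | disjE _ _ ih ihc =>
    obtain ⟨i, hi⟩ := ih hΓ
    exact ihc i (hinsert hi hΓ)
  | impI _ ih => exact fun hφ => ih (hinsert hφ hΓ)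
  | impE _ _ ih₁ ih₂ => exact ih₁ hΓ (ih₂ hΓ)
  | allI x _ _ _ _ ih => exact (Fml.trueInPoint_open0 _ _).mp (ih hΓ)
  | allE t _ _ ih => exact (Fml.trueInPoint_open0 _ _).mpr (ih hΓ)
  | exI t _ _ ih => exact (Fml.trueInPoint_open0 _ _).mp (ih hΓ)
  | exE x _ _ _ _ _ _ ih₁ ih₂ => exact ih₂ (hinsert ((Fml.trueInPoint_open0 _ _).mpr (ih₁ hΓ)) hΓ)
  | em φ _ => exact (Classical.em φ.TrueInPoint).elim (⟨true, ·⟩) (⟨false, ·⟩)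

lemma not_forces_allP (mc : MC) (C : Cond Empty ESig Unit USig) (σ : ℕ → Tm Empty ESig) :
    ¬ Forces mc (Cov ∅) C σ Fin.elim0 allP := fun h => by
  obtain ⟨y, hyC⟩ : ∃ y, y ∉ C.X := ⟨_, freshVar_notMem C 0⟩
  have hyD : {y} ⊆ ((C.insertVar y).X : Set ℕ) := by simp [Cond.insertVar]
  have hsnoc (ρ : Fin 0 → Tm Empty ESig) (t : Tm Empty ESig) :
      Fin.snoc (α := fun _ => Tm Empty ESig) ρ t 0 = t := rfl
  have hPy : (⟨(), fun _ => .fvar y⟩ : Atom Empty ESig Unit USig) ∈ C.A := by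
    simpa [Tmc.eval, hsnoc, Cond.insertVar] using mem_of_forces_atom_empty
      (h (C.insertVar y) _ (Mor.fvar_of_subset mc (Finset.subset_insert y C.X) subset_rfl)
        (.fvar y) hyD)
      (fun _ => by simpa [Tmc.eval, hsnoc, Tm.fv] using hyD)
  exact hyC (C.wf _ hPy (by simp [Atom.fv, Tm.fv]))

theorem forall_P_never_forced_and_its_negation_forced_but_not_classically_provable :
    (∀ (mc : MC) (C : Cond Empty ESig Unit USig) (σ : ℕ → Tm Empty ESig),
      ¬ Forces mc (Cov (∅ : Set (CohAx Empty ESig Unit USig))) C σ Fin.elim0 allP) ∧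
    (∀ (mc : MC) (C : Cond Empty ESig Unit USig) (σ : ℕ → Tm Empty ESig),
      Forces mc (Cov (∅ : Set (CohAx Empty ESig Unit USig))) C σ Fin.elim0
        allP.neg) ∧
    ¬ Prv True (∅ : Finset ℕ) (∅ : Set (Fml Empty ESig Unit USig 0)) allP.neg := by
  refine ⟨not_forces_allP, fun mc C σ => ?_, fun hprv => ?_⟩
  · refine (forces_neg_empty_iff mc C σ _ allP).mpr fun D τ _ => ?_
    rw [Subsingleton.elim (fun i => (Fin.elim0 i : Tm Empty ESig).subst τ) Fin.elim0]
    exact not_forces_allP mc D _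
  · exact hprv.trueInPoint (fun _ h => h.elim) trivial

end CoherentForcing
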